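/- Let L be a finite-dimensional Lie algebra over a field F and let A be an ideal of L such that A/Z(A) is a non-abelian minimal ideal of L/Z(A). Then A = A² + Z(A) and A² is a quasi-minimal ideal of L. -/

import Mathlib

namespace Paper

open LieAlgebra

section AlgDefs

variable (F : Type*) [Field F] (L : Type*) [LieRing L] [LieAlgebra F L]

/-- The nilradical of a Lie algebra: the largest nilpotent ideal (the sup of nilpotent ideals). -/
noncomputable def nilrad : LieIdeal F L :=
  sSup {I : LieIdeal F L | LieRing.IsNilpotent I}

/-- The nilpotency class of a Lie algebra. -/
noncomputable def nilClass : ℕ := sInf {k | LieModule.lowerCentralSeries F L L k = ⊥}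

/-- A Lie algebra is nilregular if the field has characteristic zero, or characteristic `p > 0`
and its nilradical has nilpotency class less than `p - 1`. -/
noncomputable def Nilregular : Prop :=
  ringChar F = 0 ∨ nilClass F (nilrad F L) < ringChar F - 1

/-- A Lie algebra is solregular if the field has characteristic zero, or characteristic `p > 0`
and its radical has derived length less than `log₂ p`. -/
noncomputable def Solregular : Prop :=
  ringChar F = 0 ∨ 2 ^ LieAlgebra.derivedLength F (LieAlgebra.radical F L) < ringChar F

/-- Regular means nilregular or solregular. -/
noncomputable def Regular : Prop := Nilregular F L ∨ Solregular F L

end AlgDefs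

section IdealDefs

variable {F : Type*} [Field F] {L : Type*} [LieRing L] [LieAlgebra F L]

/-- The centraliser `C_L(I)` of an ideal `I`, as an ideal of `L`. -/
def centralizer (I : LieIdeal F L) : LieIdeal F L where
  carrier := {x : L | ∀ y ∈ I, ⁅x, y⁆ = 0}
  zero_mem' := by intro y hy; simp
  add_mem' := by intro a b ha hb y hy; rw [add_lie, ha y hy, hb y hy, add_zero]
  smul_mem' := by intro c x hx y hy; rw [smul_lie, hx y hy, smul_zero]
  lie_mem := by
    intro x m hm y hy
    have h1 : ⁅x, ⁅m, y⁆⁆ = (0 : L) := by rw [hm y hy, lie_zero]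
    have h2 : ⁅m, ⁅x, y⁆⁆ = (0 : L) := hm _ (I.lie_mem hy)
    show ⁅⁅x, m⁆, y⁆ = (0 : L)
    rw [lie_lie, h1, h2, sub_zero]

/-- The centre `Z(I)` of an ideal `I`, as an ideal of `L`. -/
def idealCenter (I : LieIdeal F L) : LieIdeal F L where
  carrier := {x : L | x ∈ I ∧ ∀ y ∈ I, ⁅x, y⁆ = 0}
  zero_mem' := ⟨I.zero_mem, by intro y hy; simp⟩
  add_mem' := by
    intro a b ha hb
    exact ⟨I.add_mem ha.1 hb.1, fun y hy => by rw [add_lie, ha.2 y hy, hb.2 y hy, add_zero]⟩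
  smul_mem' := by
    intro c x hx
    exact ⟨I.smul_mem c hx.1, fun y hy => by rw [smul_lie, hx.2 y hy, smul_zero]⟩
  lie_mem := by
    intro x m hm
    refine ⟨I.lie_mem hm.1, fun y hy => ?_⟩
    have h1 : ⁅x, ⁅m, y⁆⁆ = (0 : L) := by rw [hm.2 y hy, lie_zero]
    have h2 : ⁅m, ⁅x, y⁆⁆ = (0 : L) := hm.2 _ (I.lie_mem hy)
    show ⁅⁅x, m⁆, y⁆ = (0 : L)
    rw [lie_lie, h1, h2, sub_zero]

/-- The centraliser `C_L(A/B)` of a chief factor, as an ideal of `L`. -/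
def chiefCentralizer (A B : LieIdeal F L) : LieIdeal F L where
  carrier := {x : L | ∀ a ∈ A, ⁅x, a⁆ ∈ B}
  zero_mem' := by intro a ha; simp [B.zero_mem]
  add_mem' := by intro x y hx hy a ha; rw [add_lie]; exact B.add_mem (hx a ha) (hy a ha)
  smul_mem' := by intro c x hx a ha; rw [smul_lie]; exact B.smul_mem c (hx a ha)
  lie_mem := by
    intro x m hm a ha
    show ⁅⁅x, m⁆, a⁆ ∈ B
    rw [lie_lie]
    exact B.sub_mem (B.lie_mem (hm a ha)) (hm _ (A.lie_mem ha))

/-- `A/Z` is a minimal ideal of `L/Z` (via the ideal correspondence). -/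
def IsMinModIdeal (Z A : LieIdeal F L) : Prop :=
  Z < A ∧ ∀ B : LieIdeal F L, Z ≤ B → B ≤ A → B = Z ∨ B = A

/-- `A` is a minimal ideal of `L`. -/
def IsMinimalIdeal (A : LieIdeal F L) : Prop := IsMinModIdeal ⊥ A

/-- An ideal `A` of `L` is quasi-minimal if `A² = A` and `A/Z(A)` is a minimal ideal
of `L/Z(A)`. -/
def IsQuasiMinimal (A : LieIdeal F L) : Prop :=
  ⁅A, A⁆ = A ∧ IsMinModIdeal (idealCenter A) A

end IdealDefs

section MoreDefs

variable (F : Type*) [Field F] (L : Type*) [LieRing L] [LieAlgebra F L]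

/-- `E†(L)`: the subalgebra generated by the quasi-minimal components of `L`. -/
noncomputable def Edagger : LieSubalgebra F L :=
  LieSubalgebra.lieSpan F L (⋃ A ∈ {A : LieIdeal F L | IsQuasiMinimal A}, (A : Set L))

/-- `N†(L) = N(L) + E†(L)`: the quasi-minimal radical of `L`. -/
noncomputable def Ndagger : LieSubalgebra F L :=
  LieIdeal.toLieSubalgebra F L (nilrad F L) ⊔ Edagger F L

/-- The generalised nilradical `N*(L)`: the ideal containing `N = N(L)` with
`N*(L)/N` the sum of all minimal ideals of `L/N` contained in `(N + C_L(N))/N`. -/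
noncomputable def Nstar : LieIdeal F L :=
  nilrad F L ⊔ sSup {A : LieIdeal F L | IsMinModIdeal (nilrad F L) A ∧
    A ≤ nilrad F L ⊔ centralizer (nilrad F L)}

/-- The Frattini ideal: the largest ideal contained in every maximal subalgebra. -/
def frattini : LieIdeal F L :=
  sSup {I : LieIdeal F L | ∀ M : LieSubalgebra F L, IsCoatom M → (I : Set L) ⊆ M}

/-- `Ñ(L)`: the ideal with `Ñ(L)/φ(L) = Soc (L/φ(L))`. -/
noncomputable def Ntilde : LieIdeal F L :=
  frattini F L ⊔ sSup {A : LieIdeal F L | IsMinModIdeal (frattini F L) A}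

/-- A characteristic ideal: one invariant under all derivations. -/
def IsCharIdeal (J : LieIdeal F L) : Prop :=
  ∀ D : LieDerivation F L L, ∀ x ∈ J, D x ∈ J

/-- The characteristic radical `R_c(L)`: the sum of all solvable characteristic ideals. -/
noncomputable def charRadical : LieIdeal F L :=
  sSup {J : LieIdeal F L | LieAlgebra.IsSolvable J ∧ IsCharIdeal F L J}

/-- A subideal: a subalgebra joined to `L` by a chain of successive ideals. -/
def IsSubideal (S : LieSubalgebra F L) : Prop :=
  ∃ n : ℕ, ∃ c : Fin (n + 1) → LieSubalgebra F L,
    c 0 = S ∧ c (Fin.last n) = ⊤ ∧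
    ∀ i : Fin n, c i.castSucc ≤ c i.succ ∧
      ∀ x ∈ c i.succ, ∀ y ∈ c i.castSucc, ⁅x, y⁆ ∈ c i.castSucc

end MoreDefs

/-! Since `Z(A)` commutes with all of `A`, every `B ≤ A` satisfies `(B + Z(A))² = B²`. Minimality
of `A/Z(A)` then gives `A = A² + Z(A)`, so `(A²)² = A²` and `Z(A²) = Z(A) ∩ A²`; an ideal `B` between
`Z(A²)` and `A²` either lies in `Z(A)` or satisfies `B + Z(A) = A`, and then `A² = B² ≤ B`. -/

section QuasiMinimal

variable {F : Type*} [Field F] {L : Type*} [LieRing L] [LieAlgebra F L]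

theorem idealCenter_le (I : LieIdeal F L) : idealCenter I ≤ I := fun _ hx => hx.1

theorem idealCenter_lie_eq_bot {I J : LieIdeal F L} (hJ : J ≤ I) :
    ⁅idealCenter I, J⁆ = ⊥ :=
  (LieSubmodule.lie_eq_bot_iff _ _).2 fun _ hz y hy => hz.2 y (hJ hy)

theorem lie_idealCenter_eq_bot {I J : LieIdeal F L} (hJ : J ≤ I) :
    ⁅J, idealCenter I⁆ = ⊥ := by
  rw [LieSubmodule.lie_comm, idealCenter_lie_eq_bot hJ]

theorem lie_sup_idealCenter_self {I B : LieIdeal F L} (hB : B ≤ I) :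
    ⁅B ⊔ idealCenter I, B ⊔ idealCenter I⁆ = ⁅B, B⁆ := by
  simp only [LieSubmodule.sup_lie, LieSubmodule.lie_sup, lie_idealCenter_eq_bot hB,
    idealCenter_lie_eq_bot hB, idealCenter_lie_eq_bot (idealCenter_le I), sup_bot_eq]

theorem idealCenter_eq_inf_of_eq_sup {A D : LieIdeal F L} (hDA : D ≤ A)
    (hA : A = D ⊔ idealCenter A) : idealCenter D = idealCenter A ⊓ D := by
  refine le_antisymm (fun x ⟨hxD, hxc⟩ => ⟨⟨hDA hxD, fun y hy => ?_⟩, hxD⟩)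
    fun x ⟨hxZ, hxD⟩ => ⟨hxD, fun y hy => hxZ.2 y (hDA hy)⟩
  rw [hA] at hy
  obtain ⟨d, hd, z, hz, rfl⟩ := (LieSubmodule.mem_sup _ _ _).1 hy
  rw [lie_add, hxc d hd, ← lie_skew, hz.2 x (hDA hxD), neg_zero, add_zero]

theorem IsMinModIdeal.eq_lie_self_sup_idealCenter {A : LieIdeal F L}
    (hmin : IsMinModIdeal (idealCenter A) A) (hna : ¬⁅A, A⁆ ≤ idealCenter A) :
    A = ⁅A, A⁆ ⊔ idealCenter A := by
  rcases hmin.2 _ le_sup_right (sup_le (LieSubmodule.lie_le_left A A) (idealCenter_le A))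
    with h | h
  · exact absurd (le_sup_left.trans h.le) hna
  · exact h.symm

theorem IsMinModIdeal.isQuasiMinimal_lie_self {A : LieIdeal F L}
    (hmin : IsMinModIdeal (idealCenter A) A) (hna : ¬⁅A, A⁆ ≤ idealCenter A) :
    IsQuasiMinimal ⁅A, A⁆ := by
  have hDA : ⁅A, A⁆ ≤ A := LieSubmodule.lie_le_left A A
  have hA := hmin.eq_lie_self_sup_idealCenter hna
  refine ⟨by conv_rhs => rw [hA, lie_sup_idealCenter_self hDA], ?_⟩
  rw [IsMinModIdeal, idealCenter_eq_inf_of_eq_sup hDA hA]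
  refine ⟨lt_of_le_of_ne inf_le_right fun h => hna (h ▸ inf_le_left), fun B hZB hBD => ?_⟩
  rcases hmin.2 (B ⊔ idealCenter A) le_sup_right (sup_le (hBD.trans hDA) (idealCenter_le A))
    with h | h
  · exact .inl (le_antisymm (le_inf (le_sup_left.trans h.le) hBD) hZB)
  · -- `A = B + Z(A)` forces `A² = B²`, which lies in `B`.
    refine .inr (le_antisymm hBD ?_)
    calc ⁅A, A⁆ = ⁅B, B⁆ := by rw [← h, lie_sup_idealCenter_self (hBD.trans hDA)]
      _ ≤ B := LieSubmodule.lie_le_left B B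

end QuasiMinimal

theorem stmt_8_general (F : Type*) [Field F] (L : Type*) [LieRing L] [LieAlgebra F L]
    (A : LieIdeal F L)
    (hmin : IsMinModIdeal (idealCenter A) A)
    (hna : ¬⁅A, A⁆ ≤ idealCenter A) :
    A = ⁅A, A⁆ ⊔ idealCenter A ∧ IsQuasiMinimal ⁅A, A⁆ :=
  ⟨hmin.eq_lie_self_sup_idealCenter hna, hmin.isQuasiMinimal_lie_self hna⟩

/-- If `A/Z(A)` is a non-abelian minimal ideal of `L/Z(A)` then `A = A² + Z(A)` and `A²`
is a quasi-minimal ideal of `L`. -/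
theorem stmt_8 (F : Type*) [Field F] (L : Type*) [LieRing L] [LieAlgebra F L]
    [FiniteDimensional F L] (A : LieIdeal F L)
    (hmin : IsMinModIdeal (idealCenter A) A)
    (hna : ¬⁅A, A⁆ ≤ idealCenter A) :
    A = ⁅A, A⁆ ⊔ idealCenter A ∧ IsQuasiMinimal ⁅A, A⁆ :=
  stmt_8_general F L A hmin hna

end Paper
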